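/- arXiv:1311.5945 — 4 statements merged into one kernel-verified Lean document; each statement's English description precedes it below -/
import Mathlib

section
/- Let $A \subseteq \{0,1\}^n$ be a nonempty monotone set. Then for every nonempty subset $B \subseteq A$ with $|B| \le |A|/2$, the edge-boundary of $B$ inside $A$, namely $\partial_E B = \{(x,y) : x \in B,\ y \in A \setminus B,\ x \text{ and } y \text{ differ in exactly one coordinate}\}$, satisfies $\frac{|\partial_E B|}{n\,|B|} \ge \frac{\mathbb{P}[A]}{16 n}$, where $\mathbb{P}[A] = |A|/2^n$. In particular, the conductance of the graph on $A$ induced from the hypercube (with self-loops added so every vertex has degree $n$) is at least $\mathbb{P}[A]/(16n)$. -/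
/-- Two vertices of the hypercube `{0,1}^n` are adjacent iff they differ
in exactly one coordinate. -/
abbrev adjacent {n : ℕ} (x y : Fin n → Bool) : Prop :=
  (Finset.univ.filter fun i => x i ≠ y i).card = 1

/-- A set `A ⊆ {0,1}^n` is monotone if `x ∈ A` and `x ≤ y` (coordinatewise)
imply `y ∈ A`. -/
def IsMonotoneSet {n : ℕ} (A : Finset (Fin n → Bool)) : Prop :=
  ∀ x ∈ A, ∀ y : Fin n → Bool, (∀ i, x i ≤ y i) → y ∈ A

/-!
We prove the stronger bound `2 |B| |A \ B| ≤ 2^n |∂_E B|` by induction on `n`, splitting the cube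
along its last coordinate into a lower and an upper half. Edges inside each half are handled by
induction. Monotonicity puts the lower half of `A` inside the upper half of `A`, so any excess of
the lower half of `B` (or of `A \ B`) over its upper half is paid for by edges along the last
coordinate, and this is exactly what the cross terms of the product need. Since `|A \ B| ≥ |A|/2`,
the stronger bound gives `|∂_E B| / |B| ≥ ℙ[A]`.
-/

open Finset

lemma Finset.card_le_card_add_card_inter_of_subset_union {α : Type*} [DecidableEq α]
    {X Y Z : Finset α} (h : X ⊆ Y ∪ Z) : #X ≤ #Y + #(X ∩ Z) := by
  refine (card_le_card fun x hx => ?_).trans (card_union_le Y (X ∩ Z))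
  rcases mem_union.1 (h hx) with hY | hZ
  · exact mem_union_left _ hY
  · exact mem_union_right _ (mem_inter.2 ⟨hx, hZ⟩)

/-- The cross terms exceed the diagonal ones by `(b₀ - b₁) (c₁ - c₀)`, which is at most
`N v` or `N w` according to its sign pattern. -/
lemma two_mul_mul_le_of_slices {N b₀ b₁ c₀ c₁ e₀ e₁ v w : ℕ}
    (h₀ : 2 * b₀ * c₀ ≤ N * e₀) (h₁ : 2 * b₁ * c₁ ≤ N * e₁)
    (hb : b₀ ≤ b₁ + v) (hc : c₀ ≤ c₁ + w) (hb₁ : b₁ ≤ N) (hc₁ : c₁ ≤ N) :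
    2 * (b₀ + b₁) * (c₀ + c₁) ≤ 2 * N * (e₀ + e₁ + v + w) := by
  suffices b₀ * c₁ + b₁ * c₀ ≤ b₀ * c₀ + b₁ * c₁ + N * (v + w) by nlinarith
  rcases le_total b₀ b₁ with hb' | hb' <;> rcases le_total c₀ c₁ with hc' | hc'
  all_goals nlinarith [Nat.mul_le_mul hb' hc', Nat.mul_le_mul hb₁ hc', Nat.mul_le_mul hb' hc₁]

lemma Finset.card_filter_fst_eq_snd {α : Type*} [DecidableEq α] (X Y : Finset α) :
    #{q ∈ X ×ˢ Y | q.1 = q.2} = #(X ∩ Y) := by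
  refine card_nbij' Prod.fst (fun z => (z, z)) ?_ ?_ ?_ ?_
  · rintro ⟨x, y⟩ h; aesop
  · intro z hz; simp_all
  · rintro ⟨x, y⟩ h; aesop
  · intro z _; rfl

namespace Hypercube

variable {n : ℕ}

def edgesBetween (B C : Finset (Fin n → Bool)) : Finset ((Fin n → Bool) × (Fin n → Bool)) :=
  (B ×ˢ C).filter fun p => adjacent p.1 p.2

def sliceLast (S : Finset (Fin (n + 1) → Bool)) (b : Bool) : Finset (Fin n → Bool) :=
  {z | Fin.snoc z b ∈ S}

@[simp]
lemma mem_sliceLast {S : Finset (Fin (n + 1) → Bool)} {b : Bool} {z : Fin n → Bool} :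
    z ∈ sliceLast S b ↔ Fin.snoc z b ∈ S := by
  simp [sliceLast]

lemma sliceLast_sdiff (S T : Finset (Fin (n + 1) → Bool)) (b : Bool) :
    sliceLast (S \ T) b = sliceLast S b \ sliceLast T b := by
  ext; simp

lemma sliceLast_mono {S T : Finset (Fin (n + 1) → Bool)} (h : S ⊆ T) (b : Bool) :
    sliceLast S b ⊆ sliceLast T b :=
  fun _ hz => mem_sliceLast.2 (h (mem_sliceLast.1 hz))

lemma card_sliceLast (S : Finset (Fin (n + 1) → Bool)) (b : Bool) :
    #(sliceLast S b) = #{x ∈ S | x (Fin.last n) = b} := by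
  refine card_nbij' (Fin.snoc · b) Fin.init ?_ ?_ ?_ ?_
  · intro z hz; simp_all
  · intro x hx
    simp only [coe_filter, Set.mem_ofPred_eq] at hx
    simp [← hx.2, hx.1]
  · intro z _; simp
  · intro x hx
    simp only [coe_filter, Set.mem_ofPred_eq] at hx
    simp [← hx.2]

lemma card_eq_card_sliceLast_add (S : Finset (Fin (n + 1) → Bool)) :
    #S = #(sliceLast S false) + #(sliceLast S true) := by
  rw [card_eq_sum_card_fiberwise (f := fun x => x (Fin.last n)) (t := univ) fun _ _ => mem_univ _,
    Fintype.sum_bool, card_sliceLast, card_sliceLast, add_comm]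

lemma le_snoc_false_true (z : Fin n → Bool) :
    (Fin.snoc z false : Fin (n + 1) → Bool) ≤ Fin.snoc z true := by
  intro i
  induction i using Fin.lastCases <;> simp

lemma isMonotoneSet_sliceLast {A : Finset (Fin (n + 1) → Bool)} (hA : IsMonotoneSet A)
    (b : Bool) : IsMonotoneSet (sliceLast A b) := by
  intro z hz w hw
  refine mem_sliceLast.2 (hA _ (mem_sliceLast.1 hz) _ fun i => ?_)
  induction i using Fin.lastCases <;> simp [hw]

lemma sliceLast_false_subset_sliceLast_true {A : Finset (Fin (n + 1) → Bool)}
    (hA : IsMonotoneSet A) : sliceLast A false ⊆ sliceLast A true :=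
  fun z hz => mem_sliceLast.2 (hA _ (mem_sliceLast.1 hz) _ (le_snoc_false_true z))

lemma card_filter_snoc_ne_snoc (z w : Fin n → Bool) (b b' : Bool) :
    #{i | (Fin.snoc z b : Fin (n + 1) → Bool) i ≠ (Fin.snoc w b' : Fin (n + 1) → Bool) i}
      = #{i | z i ≠ w i} + if b = b' then 0 else 1 := by
  rw [card_filter, card_filter, Fin.sum_univ_castSucc]
  simp [apply_ite]

lemma adjacent_snoc_snoc_self {z w : Fin n → Bool} (b : Bool) :
    adjacent (Fin.snoc z b : Fin (n + 1) → Bool) (Fin.snoc w b) ↔ adjacent z w := by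
  rw [adjacent, adjacent, card_filter_snoc_ne_snoc]
  simp

lemma adjacent_snoc_snoc_of_ne {z w : Fin n → Bool} {b b' : Bool} (h : b ≠ b') :
    adjacent (Fin.snoc z b : Fin (n + 1) → Bool) (Fin.snoc w b') ↔ z = w := by
  rw [adjacent, card_filter_snoc_ne_snoc, if_neg h, Nat.add_eq_right, card_eq_zero,
    filter_eq_empty_iff]
  simp [funext_iff]

lemma card_edgesBetween_fiber (B C : Finset (Fin (n + 1) → Bool)) (b b' : Bool) :
    #{p ∈ edgesBetween B C | (p.1 (Fin.last n), p.2 (Fin.last n)) = (b, b')}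
      = #{q ∈ sliceLast B b ×ˢ sliceLast C b' |
          adjacent (Fin.snoc q.1 b : Fin (n + 1) → Bool) (Fin.snoc q.2 b')} := by
  refine card_nbij' (fun p => (Fin.init p.1, Fin.init p.2))
    (fun q => (Fin.snoc q.1 b, Fin.snoc q.2 b')) ?_ ?_ ?_ ?_
  · rintro ⟨x, y⟩ h
    simp only [edgesBetween, coe_filter, mem_filter, mem_product, Prod.mk.injEq,
      Set.mem_ofPred_eq] at h
    obtain ⟨⟨⟨hx, hy⟩, hxy⟩, rfl, rfl⟩ := h
    simpa [Fin.snoc_init_self, hx, hy] using hxy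
  · rintro ⟨z, w⟩ h
    simp only [coe_filter, mem_product, mem_sliceLast, Set.mem_ofPred_eq] at h
    simpa [edgesBetween] using h
  · rintro ⟨x, y⟩ h
    simp only [edgesBetween, coe_filter, mem_filter, mem_product, Prod.mk.injEq,
      Set.mem_ofPred_eq] at h
    obtain ⟨-, rfl, rfl⟩ := h
    simp [Fin.snoc_init_self]
  · intro q _
    simp

lemma card_edgesBetween_eq_sliceLast (B C : Finset (Fin (n + 1) → Bool)) :
    #(edgesBetween B C)
      = #(edgesBetween (sliceLast B false) (sliceLast C false))
        + #(edgesBetween (sliceLast B true) (sliceLast C true))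
        + #(sliceLast B false ∩ sliceLast C true) + #(sliceLast B true ∩ sliceLast C false) := by
  rw [card_eq_sum_card_fiberwise (f := fun p => (p.1 (Fin.last n), p.2 (Fin.last n)))
      (t := univ) fun _ _ => mem_univ _, Fintype.sum_prod_type]
  simp only [Fintype.sum_bool, card_edgesBetween_fiber, adjacent_snoc_snoc_self,
    adjacent_snoc_snoc_of_ne Bool.false_ne_true.symm, adjacent_snoc_snoc_of_ne Bool.false_ne_true,
    card_filter_fst_eq_snd]
  unfold edgesBetween
  omega

lemma card_le_two_pow (S : Finset (Fin n → Bool)) : #S ≤ 2 ^ n := by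
  simpa using card_le_univ S

theorem two_mul_card_mul_card_sdiff_le {A B : Finset (Fin n → Bool)}
    (hA : IsMonotoneSet A) (hBA : B ⊆ A) :
    2 * #B * #(A \ B) ≤ 2 ^ n * #(edgesBetween B (A \ B)) := by
  induction n with
  | zero =>
    have hsplit := card_sdiff_add_card_eq_card hBA
    have hA_card := card_le_two_pow A
    have hprod : #B * #(A \ B) = 0 := Nat.mul_eq_zero.2 (by rw [pow_zero] at hA_card; omega)
    simp [mul_assoc, hprod]
  | succ n ih =>
    have ih₀ := ih (isMonotoneSet_sliceLast hA false) (sliceLast_mono hBA false)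
    have ih₁ := ih (isMonotoneSet_sliceLast hA true) (sliceLast_mono hBA true)
    rw [← sliceLast_sdiff] at ih₀ ih₁
    have hA₁ : sliceLast A true = sliceLast B true ∪ sliceLast (A \ B) true := by
      rw [sliceLast_sdiff, union_sdiff_of_subset (sliceLast_mono hBA true)]
    -- The two bounds below are where monotonicity enters: a point of the lower half of `A` lies
    -- in the upper half of `B` or of `A \ B`, and otherwise it spans an edge of the cut.
    have hcover := hA₁ ▸ sliceLast_false_subset_sliceLast_true hA
    have hB₀ : #(sliceLast B false)
        ≤ #(sliceLast B true) + #(sliceLast B false ∩ sliceLast (A \ B) true) :=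
      card_le_card_add_card_inter_of_subset_union
        ((sliceLast_mono hBA false).trans hcover)
    have hC₀ : #(sliceLast (A \ B) false)
        ≤ #(sliceLast (A \ B) true) + #(sliceLast B true ∩ sliceLast (A \ B) false) := by
      rw [inter_comm]
      rw [union_comm] at hcover
      exact card_le_card_add_card_inter_of_subset_union
        ((sliceLast_mono sdiff_subset false).trans hcover)
    rw [card_eq_card_sliceLast_add B, card_eq_card_sliceLast_add (A \ B),
      card_edgesBetween_eq_sliceLast, pow_succ, mul_comm _ 2]
    exact two_mul_mul_le_of_slices ih₀ ih₁ hB₀ hC₀ (card_le_two_pow _) (card_le_two_pow _)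

lemma card_div_two_pow_le {A B : Finset (Fin n → Bool)} (hA : IsMonotoneSet A)
    (hBA : B ⊆ A) (hB : B.Nonempty) (hhalf : 2 * #B ≤ #A) :
    (#A : ℝ) / 2 ^ n ≤ #(edgesBetween B (A \ B)) / #B := by
  have hsplit := card_sdiff_add_card_eq_card hBA
  have key : #A * #B ≤ #(edgesBetween B (A \ B)) * 2 ^ n :=
    calc #A * #B ≤ 2 * #B * #(A \ B) := by nlinarith
      _ ≤ 2 ^ n * #(edgesBetween B (A \ B)) := two_mul_card_mul_card_sdiff_le hA hBA
      _ = _ := mul_comm _ _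
  rw [div_le_div_iff₀ (by positivity) (by exact_mod_cast hB.card_pos)]
  exact_mod_cast key

end Hypercube

theorem conductance_lower_bound_general {n : ℕ} (A B : Finset (Fin n → Bool))
    (hmono : IsMonotoneSet A)
    (hBA : B ⊆ A) (hB : B.Nonempty) (hhalf : 2 * B.card ≤ A.card) :
    ((((B ×ˢ (A \ B)).filter fun p => adjacent p.1 p.2).card : ℝ)) / (n * B.card)
      ≥ ((A.card : ℝ) / 2 ^ n) / (16 * n) :=
  calc ((A.card : ℝ) / 2 ^ n) / (16 * n) = (A.card / 2 ^ n / 16) / n := (div_div _ _ _).symm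
    _ ≤ (#(Hypercube.edgesBetween B (A \ B)) / B.card) / n := by
      refine div_le_div_of_nonneg_right ?_ n.cast_nonneg
      exact (div_le_self (by positivity) (by norm_num)).trans
        (Hypercube.card_div_two_pow_le hmono hBA hB hhalf)
    _ = _ := by rw [div_div, mul_comm]; rfl

/-- For a nonempty monotone `A ⊆ {0,1}^n` and nonempty `B ⊆ A` with
`|B| ≤ |A|/2`, the edge boundary of `B` inside `A` satisfies
`|∂_E B| / (n |B|) ≥ ℙ[A] / (16 n)` where `ℙ[A] = |A|/2^n`. -/
theorem conductance_lower_bound {n : ℕ} (A B : Finset (Fin n → Bool))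
    (hA : A.Nonempty) (hmono : IsMonotoneSet A)
    (hBA : B ⊆ A) (hB : B.Nonempty) (hhalf : 2 * B.card ≤ A.card) :
    ((((B ×ˢ (A \ B)).filter fun p => adjacent p.1 p.2).card : ℝ)) / (n * B.card)
      ≥ ((A.card : ℝ) / 2 ^ n) / (16 * n) :=
  conductance_lower_bound_general A B hmono hBA hB hhalf
end

section
/- For any set $S \subseteq \{0,1\}^n$, define $\delta(S) = (n 2^n)^{-1} \cdot |\{(x,y) \in \{0,1\}^n \times \{0,1\}^n : x \le y,\ x \text{ and } y \text{ differ in exactly one coordinate},\ x \in S,\ y \notin S\}|$ and $\epsilon(S) = \min\{\mathbb{P}(S \oplus A) : A \subseteq \{0,1\}^n \text{ monotone}\}$, where $\oplus$ denotes symmetric difference. Then $\delta(S) \ge \epsilon(S)/n$. -/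
/-!
Induct on a set `T` of coordinates: every `S` is within `∑ i ∈ T, #(violations i S)` of a set
that is monotone in the directions of `T`. To add a direction `i`, fix the two faces
`x i = false` and `x i = true` of `S` separately, getting `B₀` and `B₁`, and glue them in one of
two ways: either shrink the lower face into the upper one or enlarge the upper face by the lower
one. Over every edge in direction `i` the two gluings together cost at most twice the errors of
`B₀`, `B₁` plus twice the number of violated `i`-edges, so the cheaper one fits the budget.
Finally, the violated edges in the various directions are distinct violated pairs `x ≤ y`.
-/

open Finset Function
open scoped symmDiff

namespace Hypercube

variable {ι : Type*} [DecidableEq ι]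

theorem update_eq_of_apply_eq {x : ι → Bool} {i : ι} {b : Bool} (h : x i = b) :
    update x i b = x := by
  rw [← h, update_eq_self]

def IsMonotoneAlong (T : Finset ι) (A : Finset (ι → Bool)) : Prop :=
  ∀ x ∈ A, ∀ i ∈ T, update x i true ∈ A

theorem IsMonotoneAlong.mem_of_le [Fintype ι] {A : Finset (ι → Bool)}
    (hA : IsMonotoneAlong univ A) {x y : ι → Bool} (hx : x ∈ A) (hxy : ∀ i, x i ≤ y i) :
    y ∈ A := by
  have raise : ∀ D : Finset ι, (fun j => if j ∈ D then true else x j) ∈ A := by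
    intro D
    induction D using Finset.induction_on with
    | empty => simpa using hx
    | insert i D _ ih =>
      convert hA _ ih i (mem_univ i) using 1
      ext j
      by_cases hj : j = i <;> simp [hj]
  convert raise {j | y j = true} using 1
  ext j
  have hxyj := hxy j
  cases hx : x j <;> cases hy : y j <;> simp_all [Bool.le_iff_imp]

variable [Fintype ι]

/-- Lower endpoints of the edges in direction `i` along which `S` fails to be monotone. -/
def violations (i : ι) (S : Finset (ι → Bool)) : Finset (ι → Bool) :=
  {x ∈ S | x i = false ∧ update x i true ∉ S}

theorem sum_eq_sum_lower {M : Type*} [AddCommMonoid M] (i : ι) (g : (ι → Bool) → M) :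
    ∑ x, g x = ∑ x with x i = false, (g x + g (update x i true)) := by
  rw [sum_add_distrib, ← sum_filter_add_sum_filter_not univ (fun x => x i = false)]
  congr 1
  refine sum_nbij' (update · i false) (update · i true) ?_ ?_ ?_ ?_ ?_ <;> intro x hx <;>
    simp only [mem_filter, mem_univ, true_and, Bool.not_eq_false] at hx <;>
    simp [hx, update_eq_of_apply_eq]

theorem card_eq_sum_lower (i : ι) (F : Finset (ι → Bool)) :
    #F = ∑ x with x i = false,
      ((if x ∈ F then 1 else 0) + if update x i true ∈ F then 1 else 0) := by
  rw [← sum_eq_sum_lower, sum_boole, filter_mem_eq_inter, univ_inter, Nat.cast_id]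

theorem violations_filter {j : ι} (S : Finset (ι → Bool)) (p : (ι → Bool) → Prop)
    [DecidablePred p] (hp : ∀ x, p (update x j true) ↔ p x) :
    violations j {x ∈ S | p x} = {x ∈ violations j S | p x} := by
  ext x
  simp only [violations, mem_filter, hp]
  tauto

theorem card_violations_filter_add {i j : ι} (hji : j ≠ i) (S : Finset (ι → Bool)) :
    #(violations j {x ∈ S | x i = false}) + #(violations j {x ∈ S | x i = true}) =
      #(violations j S) := by
  have hp (b : Bool) (x : ι → Bool) : update x j true i = b ↔ x i = b := by
    rw [update_of_ne hji.symm]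
  rw [violations_filter _ _ (hp _), violations_filter _ _ (hp _), add_comm]
  simpa only [Bool.not_eq_true] using card_filter_add_card_filter_not (s := violations j S)
    (fun x => x i = true)

theorem sum_card_violations_filter_add {i : ι} {T : Finset ι} (hi : i ∉ T)
    (S : Finset (ι → Bool)) :
    ∑ j ∈ T, #(violations j {x ∈ S | x i = false}) +
        ∑ j ∈ T, #(violations j {x ∈ S | x i = true}) =
      ∑ j ∈ T, #(violations j S) := by
  rw [← sum_add_distrib]
  exact sum_congr rfl fun j hj => card_violations_filter_add (ne_of_mem_of_not_mem hj hi) S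

/- `B₀` is only read on the face `x i = false` and `B₁` on the face `x i = true`. `mergeLow`
keeps `B₁` and cuts the lower face down to `B₀ ∩ (B₁ shifted down)`; `mergeHigh` keeps `B₀` and
enlarges the upper face to `B₁ ∪ (B₀ shifted up)`. -/
def mergeLow (i : ι) (B₀ B₁ : Finset (ι → Bool)) : Finset (ι → Bool) :=
  {x | update x i true ∈ B₁ ∧ (x i = true ∨ x ∈ B₀)}

def mergeHigh (i : ι) (B₀ B₁ : Finset (ι → Bool)) : Finset (ι → Bool) :=
  {x | update x i false ∈ B₀ ∨ (x i = true ∧ x ∈ B₁)}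

section Merge

variable {i : ι} {T : Finset ι} {B₀ B₁ : Finset (ι → Bool)}

theorem IsMonotoneAlong.mergeLow (hi : i ∉ T) (h₀ : IsMonotoneAlong T B₀)
    (h₁ : IsMonotoneAlong T B₁) : IsMonotoneAlong (insert i T) (mergeLow i B₀ B₁) := by
  intro x hx j hj
  simp only [Hypercube.mergeLow, mem_filter, mem_univ, true_and] at hx ⊢
  obtain rfl | hj := mem_insert.1 hj
  · simpa using hx.1
  have hji : j ≠ i := ne_of_mem_of_not_mem hj hi
  rw [update_comm hji, update_of_ne hji.symm]
  exact ⟨h₁ _ hx.1 j hj, hx.2.imp_right fun hx₀ => h₀ x hx₀ j hj⟩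

theorem IsMonotoneAlong.mergeHigh (hi : i ∉ T) (h₀ : IsMonotoneAlong T B₀)
    (h₁ : IsMonotoneAlong T B₁) : IsMonotoneAlong (insert i T) (mergeHigh i B₀ B₁) := by
  intro x hx j hj
  simp only [Hypercube.mergeHigh, mem_filter, mem_univ, true_and] at hx ⊢
  obtain rfl | hj := mem_insert.1 hj
  · rcases hx with hx₀ | ⟨hxj, hx₁⟩
    · simpa using Or.inl hx₀
    · simpa [update_eq_of_apply_eq hxj] using Or.inr hx₁
  have hji : j ≠ i := ne_of_mem_of_not_mem hj hi
  rw [update_comm hji, update_of_ne hji.symm]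
  exact hx.imp (fun hx₀ => h₀ _ hx₀ j hj) fun hx₁ => ⟨hx₁.1, h₁ x hx₁.2 j hj⟩

/- The inequality already holds edge by edge: over `{x, update x i true}` it is a case analysis on
the memberships of the two endpoints in `S`, `B₀` and `B₁`. -/
theorem card_symmDiff_mergeLow_add_mergeHigh_le (S : Finset (ι → Bool)) :
    #(S ∆ mergeLow i B₀ B₁) + #(S ∆ mergeHigh i B₀ B₁) ≤
      2 * (#({x ∈ S | x i = false} ∆ B₀) + #({x ∈ S | x i = true} ∆ B₁) +
        #(violations i S)) := by
  simp only [card_eq_sum_lower i, ← sum_add_distrib, mul_sum]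
  refine sum_le_sum fun x hx => ?_
  simp only [mem_filter, mem_univ, true_and] at hx
  simp only [Hypercube.mergeLow, Hypercube.mergeHigh, violations, mem_symmDiff, mem_filter,
    mem_univ, true_and, hx, update_self, update_idem, update_eq_of_apply_eq hx]
  by_cases hs : x ∈ S <;> by_cases hs' : update x i true ∈ S <;> by_cases h₀ : x ∈ B₀ <;>
    by_cases h₁ : update x i true ∈ B₁ <;> simp [hs, hs', h₀, h₁]
    <;> split_ifs <;> omega

end Merge

theorem exists_isMonotoneAlong_card_symmDiff_le (T : Finset ι) (S : Finset (ι → Bool)) :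
    ∃ A, IsMonotoneAlong T A ∧ #(S ∆ A) ≤ ∑ i ∈ T, #(violations i S) := by
  induction T using Finset.induction_on generalizing S with
  | empty => exact ⟨S, by simp [IsMonotoneAlong], by simp⟩
  | insert i T hi ih =>
    obtain ⟨B₀, hB₀, hcost₀⟩ := ih {x ∈ S | x i = false}
    obtain ⟨B₁, hB₁, hcost₁⟩ := ih {x ∈ S | x i = true}
    have hsplit := sum_card_violations_filter_add hi S
    have hmerge := card_symmDiff_mergeLow_add_mergeHigh_le (i := i) (B₀ := B₀) (B₁ := B₁) S
    rw [sum_insert hi]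
    rcases le_total #(S ∆ mergeLow i B₀ B₁) #(S ∆ mergeHigh i B₀ B₁) with hle | hle
    · exact ⟨_, hB₀.mergeLow hi hB₁, by omega⟩
    · exact ⟨_, hB₀.mergeHigh hi hB₁, by omega⟩

theorem sum_card_violations_le (S : Finset (ι → Bool)) :
    ∑ i, #(violations i S) ≤ #((univ ×ˢ univ).filter fun p : (ι → Bool) × (ι → Bool) =>
      (∀ i, p.1 i ≤ p.2 i) ∧ #{i | p.1 i ≠ p.2 i} = 1 ∧ p.1 ∈ S ∧ p.2 ∉ S) := by
  rw [← card_sigma]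
  refine card_le_card_of_injOn (fun e => (e.2, update e.2 e.1 true)) ?_ ?_
  · rintro ⟨i, x⟩ hx
    simp only [coe_sigma, Set.mem_sigma_iff, mem_coe, mem_univ, true_and, violations,
      mem_filter] at hx
    have hdiff : ({j | x j ≠ update x i true j} : Finset ι) = {i} := by
      ext j
      by_cases hj : j = i <;> simp [hj, hx.2.1]
    refine mem_filter.2 ⟨mem_product.2 ⟨mem_univ _, mem_univ _⟩, ?_, ?_, hx.1, hx.2.2⟩
    · intro j
      by_cases hj : j = i <;> simp [hj]
    · simp [hdiff]
  · rintro ⟨i, x⟩ hx ⟨j, y⟩ - hxy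
    simp only [Prod.mk.injEq] at hxy
    obtain ⟨rfl, hupd⟩ := hxy
    simp only [coe_sigma, Set.mem_sigma_iff, mem_coe, mem_univ, true_and, violations,
      mem_filter] at hx
    obtain rfl : i = j := by
      by_contra hij
      simpa [hx.2.1, update_of_ne hij] using congrFun hupd i
    rfl

end Hypercube

open Hypercube

/-- The Goldreich–Goldwasser–Lehman–Ron–Samorodnitsky theorem:
for any `S ⊆ {0,1}^n`, letting
`δ(S) = (n 2^n)⁻¹ |{(x,y) : x ≤ y, x,y adjacent, x ∈ S, y ∉ S}|` and
`ε(S) = min { ℙ(S ⊕ A) : A monotone }`, we have `δ(S) ≥ ε(S)/n`.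
Since the minimum is attained, this is stated as: there is a monotone `A`
witnessing `δ(S) ≥ ℙ(S ⊕ A)/n`. -/
theorem monotonicity_testing {n : ℕ} (S : Finset (Fin n → Bool)) :
    ∃ A : Finset (Fin n → Bool), IsMonotoneSet A ∧
      (((Finset.univ ×ˢ Finset.univ).filter
          fun p : (Fin n → Bool) × (Fin n → Bool) =>
            (∀ i, p.1 i ≤ p.2 i) ∧ adjacent p.1 p.2 ∧ p.1 ∈ S ∧ p.2 ∉ S).card : ℝ)
            / ((n : ℝ) * 2 ^ n)
        ≥ (((symmDiff S A).card : ℝ) / 2 ^ n) / n := by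
  obtain ⟨A, hA, hcost⟩ := exists_isMonotoneAlong_card_symmDiff_le univ S
  refine ⟨A, fun x hx y hxy => hA.mem_of_le hx hxy, ?_⟩
  rw [ge_iff_le, div_div, mul_comm ((2 : ℝ) ^ n)]
  gcongr
  exact_mod_cast hcost.trans (sum_card_violations_le S)
end

section
/- Let $n \ge 2m \ge 2$ and let $A = \{x \in \{0,1\}^n : x_1 = \cdots = x_m = 1\} \cup \{x : x_{m+1} = \cdots = x_{2m} = 1\}$ and $B = \{x : x_1 = \cdots = x_m = 1\} \subseteq A$. Then the edge-boundary of $B$ inside $A$ satisfies $|\partial_E B| = m \cdot 2^{n-2m}$, and consequently $\Phi(B) = \frac{|\partial_E B|}{n |B|} = \frac{m}{n} \cdot 2^{-m} \le 2^{-m}$. -/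
open Finset Function

namespace Hypercube

variable {n : ℕ}

def allTrueOn (S : Finset (Fin n)) : Finset (Fin n → Bool) :=
  univ.filter fun x => ∀ i ∈ S, x i = true

def edgeBoundary (A B : Finset (Fin n → Bool)) : Finset ((Fin n → Bool) × (Fin n → Bool)) :=
  (B ×ˢ (A \ B)).filter fun p => adjacent p.1 p.2

@[simp]
lemma mem_allTrueOn {S : Finset (Fin n)} {x : Fin n → Bool} :
    x ∈ allTrueOn S ↔ ∀ i ∈ S, x i = true := by
  simp [allTrueOn]

lemma card_allTrueOn (S : Finset (Fin n)) : #(allTrueOn S) = 2 ^ (n - #S) := by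
  classical
  have e : {x : Fin n → Bool // ∀ i ∈ S, x i = true} ≃ ({i // i ∉ S} → Bool) :=
    (Equiv.subtypeEquivRight fun x => by
      simp only [funext_iff, Subtype.forall, comp_apply]).trans
      (Equiv.subtypePreimage (fun i : Fin n => i ∈ S) fun _ => true)
  rw [allTrueOn, ← Fintype.card_subtype, Fintype.card_congr e, Fintype.card_fun,
    Fintype.card_bool, Fintype.card_subtype_compl, Fintype.card_coe, Fintype.card_fin]

lemma adjacent_update_of_ne {x : Fin n → Bool} {j : Fin n} {b : Bool} (h : x j ≠ b) :
    adjacent x (update x j b) := by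
  have : (univ.filter fun i => x i ≠ update x j b i) = {j} := by
    ext i
    rcases eq_or_ne i j with rfl | hij
    · simp [h]
    · simp [hij]
  simp [adjacent, this]

lemma exists_eq_update_of_adjacent {x y : Fin n → Bool} (h : adjacent x y) :
    ∃ j, x j ≠ y j ∧ y = update x j (y j) := by
  obtain ⟨j, hj⟩ := card_eq_one.1 h
  have hdiff : ∀ i, x i ≠ y i ↔ i = j := fun i => by
    simpa using congrArg (i ∈ ·) hj
  refine ⟨j, (hdiff j).2 rfl, funext fun i => ?_⟩
  rcases eq_or_ne i j with rfl | hij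
  · simp
  · rw [update_of_ne hij]
    exact not_not.1 (mt (hdiff i).1 hij) |>.symm

variable {S T : Finset (Fin n)}

lemma update_mem_edgeBoundary (hST : Disjoint S T) {j : Fin n} (hj : j ∈ S)
    {x : Fin n → Bool} (hx : x ∈ allTrueOn (S ∪ T)) :
    (x, update x j false) ∈ edgeBoundary (allTrueOn S ∪ allTrueOn T) (allTrueOn S) := by
  simp only [mem_allTrueOn, mem_union] at hx
  have hjT : j ∉ T := disjoint_left.1 hST hj
  have hflip : ¬ ∀ i ∈ S, update x j false i = true := fun h => by simpa using h j hj
  simp only [edgeBoundary, mem_filter, mem_product, mem_sdiff, mem_union, mem_allTrueOn]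
  refine ⟨⟨fun i hi => hx i (.inl hi), .inr fun i hi => ?_, hflip⟩,
    adjacent_update_of_ne (by simp [hx j (.inl hj)])⟩
  rw [update_of_ne (ne_of_mem_of_not_mem hi hjT)]
  exact hx i (.inr hi)

lemma exists_eq_update_of_mem_edgeBoundary {p : (Fin n → Bool) × (Fin n → Bool)}
    (hp : p ∈ edgeBoundary (allTrueOn S ∪ allTrueOn T) (allTrueOn S)) :
    ∃ j ∈ S, p.1 ∈ allTrueOn (S ∪ T) ∧ p.2 = update p.1 j false := by
  obtain ⟨x, y⟩ := p
  simp only [edgeBoundary, mem_filter, mem_product, mem_sdiff, mem_union, mem_allTrueOn] at hp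
  obtain ⟨⟨hx, hyA, hyS⟩, hadj⟩ := hp
  obtain ⟨j, hxy, hy⟩ := exists_eq_update_of_adjacent hadj
  have hyT : ∀ i ∈ T, y i = true := hyA.resolve_left hyS
  obtain ⟨k, hkS, hyk⟩ : ∃ k ∈ S, y k = false := by simpa using hyS
  have hkj : k = j := by
    by_contra hkj
    rw [hy, update_of_ne hkj] at hyk
    simp [hx k hkS] at hyk
  subst hkj
  have hkT : k ∉ T := fun hkT => by simp [hyT k hkT] at hyk
  refine ⟨k, hkS, mem_allTrueOn.2 fun i hi => ?_, by rwa [hyk] at hy⟩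
  rcases mem_union.1 hi with hiS | hiT
  · exact hx i hiS
  · rw [← hyT i hiT, hy, update_of_ne (ne_of_mem_of_not_mem hiT hkT)]

theorem card_edgeBoundary (hST : Disjoint S T) :
    #(edgeBoundary (allTrueOn S ∪ allTrueOn T) (allTrueOn S)) = #S * #(allTrueOn (S ∪ T)) := by
  rw [← card_product]
  symm
  refine card_bij (fun p _ => (p.2, update p.2 p.1 false)) (fun p hp => ?_) ?_ ?_
  · rw [mem_product] at hp
    exact update_mem_edgeBoundary hST hp.1 hp.2
  · rintro ⟨j, x⟩ hp ⟨j', x'⟩ - heq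
    simp only [Prod.mk.injEq] at heq
    obtain ⟨rfl, hupd⟩ := heq
    by_contra hjj
    have hj : update x j false j = update x j' false j := congrFun hupd j
    rw [update_self, update_of_ne (by simpa using hjj)] at hj
    simp only [mem_product, mem_allTrueOn] at hp
    simp [hp.2 j (mem_union_left _ hp.1)] at hj
  · intro p hp
    obtain ⟨j, hj, hx, hy⟩ := exists_eq_update_of_mem_edgeBoundary hp
    exact ⟨(j, p.1), mem_product.2 ⟨hj, hx⟩, by rw [← hy]⟩

end Hypercube

open Hypercube

theorem conductance_example_general {n m : ℕ} (hnm : 2 * m ≤ n) :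
    let A : Finset (Fin n → Bool) := Finset.univ.filter fun x =>
      (∀ i : Fin n, i.1 < m → x i = true) ∨
      (∀ i : Fin n, m ≤ i.1 → i.1 < 2 * m → x i = true)
    let B : Finset (Fin n → Bool) := Finset.univ.filter fun x =>
      ∀ i : Fin n, i.1 < m → x i = true
    ((B ×ˢ (A \ B)).filter fun p => adjacent p.1 p.2).card = m * 2 ^ (n - 2 * m) ∧
    ((((B ×ˢ (A \ B)).filter fun p => adjacent p.1 p.2).card : ℝ)) / (n * B.card)
      = ((m : ℝ) / n) * (1 / 2) ^ m ∧
    ((m : ℝ) / n) * (1 / 2) ^ m ≤ (1 / 2 : ℝ) ^ m := by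
  intro A B
  set S : Finset (Fin n) := univ.filter fun i => i.1 < m
  set T : Finset (Fin n) := univ.filter fun i => m ≤ i.1 ∧ i.1 < 2 * m
  have hB : B = allTrueOn S := by ext; simp [B, S]
  have hA : A = allTrueOn S ∪ allTrueOn T := by ext; simp [A, S, T, and_imp]
  have hST : Disjoint S T := disjoint_filter.2 fun _ _ h => by omega
  have hSunionT : S ∪ T = univ.filter fun i : Fin n => i.1 < 2 * m := by
    ext; simp [S, T]; omega
  have hcount : #(edgeBoundary A B) = m * 2 ^ (n - 2 * m) := by
    rw [hA, hB, card_edgeBoundary hST, card_allTrueOn, hSunionT, Fin.card_filter_val_lt,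
      Fin.card_filter_val_lt, min_eq_right (by omega), min_eq_right hnm]
  have hBcard : #B = 2 ^ m * 2 ^ (n - 2 * m) := by
    rw [hB, card_allTrueOn, Fin.card_filter_val_lt, min_eq_right (by omega), ← pow_add]
    congr 1; omega
  refine ⟨hcount, ?_, ?_⟩
  · rw [edgeBoundary] at hcount
    rw [hcount, hBcard]
    push_cast
    rw [← mul_assoc, mul_div_mul_right _ _ (by positivity), div_mul_eq_div_div, one_div_pow,
      mul_one_div]
  · have hmn : (m : ℝ) ≤ n := by exact_mod_cast (by omega : m ≤ n)
    exact mul_le_of_le_one_left (by positivity) (div_le_one_of_le₀ hmn n.cast_nonneg)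

/-- For `n ≥ 2m ≥ 2`, `A = {x : x_1 = ⋯ = x_m = 1} ∪ {x : x_{m+1} = ⋯ = x_{2m} = 1}`
and `B = {x : x_1 = ⋯ = x_m = 1}`, the edge boundary of `B` inside `A` has size
`m · 2^(n-2m)`, and hence `Φ(B) = |∂_E B|/(n|B|) = (m/n)·2^{-m} ≤ 2^{-m}`. -/
theorem conductance_example {n m : ℕ} (hm : 1 ≤ m) (hnm : 2 * m ≤ n) :
    let A : Finset (Fin n → Bool) := Finset.univ.filter fun x =>
      (∀ i : Fin n, i.1 < m → x i = true) ∨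
      (∀ i : Fin n, m ≤ i.1 → i.1 < 2 * m → x i = true)
    let B : Finset (Fin n → Bool) := Finset.univ.filter fun x =>
      ∀ i : Fin n, i.1 < m → x i = true
    ((B ×ˢ (A \ B)).filter fun p => adjacent p.1 p.2).card = m * 2 ^ (n - 2 * m) ∧
    ((((B ×ˢ (A \ B)).filter fun p => adjacent p.1 p.2).card : ℝ)) / (n * B.card)
      = ((m : ℝ) / n) * (1 / 2) ^ m ∧
    ((m : ℝ) / n) * (1 / 2) ^ m ≤ (1 / 2 : ℝ) ^ m :=
  conductance_example_general hnm
end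

section
/- Let $n \ge 2m$ with $m \ge 5$, let $A = \{x \in \{0,1\}^n : x_1 = \cdots = x_m = 1\} \cup \{x : x_{m+1} = \cdots = x_{2m} = 1\}$, and let $P$ be the transition matrix on $A$ of the censored Glauber chain $M_A$. Let $x_0 \in A$ be the point with $x_i = 1$ for $1 \le i \le m$ and $x_i = 0$ for $m < i \le n$. Then for every integer $t < 2^{m-4}$, $\frac{1}{2} \sum_{y \in A} \left| P^t(x_0, y) - \frac{1}{|A|} \right| > \frac{1}{4}$; that is, the mixing time of $M_A$ is at least $2^{m-4}$. -/
/-- The set `A = {x : x_1 = ⋯ = x_m = 1} ∪ {x : x_{m+1} = ⋯ = x_{2m} = 1}`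
(coordinates indexed from 0, so the first block is `i < m` and the second
is `m ≤ i < 2m`). -/
def twoBlocks (n m : ℕ) : Finset (Fin n → Bool) :=
  Finset.univ.filter fun x =>
    (∀ i : Fin n, i.1 < m → x i = true) ∨
    (∀ i : Fin n, m ≤ i.1 → i.1 < 2 * m → x i = true)

/-- The transition matrix on `A` of the censored Glauber chain `M_A`:
`P(x,y) = 1/(2n)` for distinct adjacent `x, y ∈ A`,
`P(x,x) = 1 - |{y ∈ A : y ≠ x, y adjacent to x}|/(2n)`, and `0` otherwise. -/
noncomputable def censoredPmat (n : ℕ) (A : Finset (Fin n → Bool)) :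
    Matrix {x // x ∈ A} {x // x ∈ A} ℝ :=
  fun x y =>
    if (x : Fin n → Bool) = y then
      1 - ((A.filter fun z => z ≠ (x : Fin n → Bool) ∧ adjacent (x : Fin n → Bool) z).card : ℝ) / (2 * n)
    else if adjacent (x : Fin n → Bool) (y : Fin n → Bool) then 1 / (2 * n)
    else 0

open Finset Matrix

namespace CensoredGlauber

section Kernels

variable {ι : Type*}

lemma sum_coe_le_sum [Fintype ι] {A : Finset ι} {f : ι → ℝ} (hf : 0 ≤ f)
    (T : Finset {x // x ∈ A}) : ∑ y ∈ T, f y ≤ ∑ y, f y :=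
  calc ∑ y ∈ T, f y ≤ ∑ y : {x // x ∈ A}, f y := sum_le_univ_sum_of_nonneg fun y => hf y
    _ = ∑ y ∈ A, f y := sum_coe_sort A f
    _ ≤ ∑ y, f y := sum_le_univ_sum_of_nonneg fun y => hf y

lemma mulVec_le_mulVec_of_nonneg [Fintype ι] {Q : Matrix ι ι ℝ} (hQ : ∀ x y, 0 ≤ Q x y)
    {u v : ι → ℝ} (huv : u ≤ v) : Q *ᵥ u ≤ Q *ᵥ v := fun x =>
  sum_le_sum fun y _ => mul_le_mul_of_nonneg_left (huv y) (hQ x y)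

variable [DecidableEq ι]

def killed (P : Matrix ι ι ℝ) (S : Finset ι) : Matrix ι ι ℝ :=
  fun x y => if x ∈ S ∧ y ∈ S then P x y else 0

lemma killed_nonneg {P : Matrix ι ι ℝ} (hP : ∀ x y, 0 ≤ P x y) (S : Finset ι) (x y : ι) :
    0 ≤ killed P S x y := by
  unfold killed; split_ifs <;> simp [hP]

lemma killed_le {P : Matrix ι ι ℝ} (hP : ∀ x y, 0 ≤ P x y) (S : Finset ι) (x y : ι) :
    killed P S x y ≤ P x y := by
  unfold killed; split_ifs <;> simp [hP]

variable [Fintype ι]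

lemma pow_apply_nonneg {Q : Matrix ι ι ℝ} (hQ : ∀ x y, 0 ≤ Q x y) (t : ℕ) (x y : ι) :
    0 ≤ (Q ^ t) x y := by
  induction t generalizing y with
  | zero => rw [pow_zero, one_apply]; split_ifs <;> norm_num
  | succ t ih => rw [pow_succ, mul_apply]; exact sum_nonneg fun z _ => mul_nonneg (ih z) (hQ z y)

lemma pow_apply_le_pow_apply {Q P : Matrix ι ι ℝ} (hQ : ∀ x y, 0 ≤ Q x y)
    (hQP : ∀ x y, Q x y ≤ P x y) (t : ℕ) (x y : ι) : (Q ^ t) x y ≤ (P ^ t) x y := by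
  induction t generalizing y with
  | zero => rfl
  | succ t ih =>
    rw [pow_succ, pow_succ, mul_apply, mul_apply]
    exact sum_le_sum fun z _ => mul_le_mul (ih z) (hQP z y) (hQ z y)
      (pow_apply_nonneg (fun a b => (hQ a b).trans (hQP a b)) t x z)

lemma pow_mulVec_comp_le_iterate {α : Type*} {Q : Matrix ι ι ℝ} (hQ : ∀ x y, 0 ≤ Q x y)
    (φ : ι → α) {T : (α → ℝ) → α → ℝ} (hT : ∀ g, 0 ≤ g → 0 ≤ T g)
    (hQT : ∀ g, 0 ≤ g → Q *ᵥ (g ∘ φ) ≤ T g ∘ φ) (t : ℕ) {g : α → ℝ} (hg : 0 ≤ g) :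
    Q ^ t *ᵥ (g ∘ φ) ≤ T^[t] g ∘ φ := by
  induction t generalizing g with
  | zero => simp
  | succ t ih =>
    rw [pow_succ, ← mulVec_mulVec, Function.iterate_succ_apply]
    exact (mulVec_le_mulVec_of_nonneg (pow_apply_nonneg hQ t) (hQT g hg)).trans (ih (hT g hg))

variable {P : Matrix ι ι ℝ} {S : Finset ι}

lemma killed_pow_apply_of_notMem {x y : ι} (hx : x ∈ S) (hy : y ∉ S) (t : ℕ) :
    (killed P S ^ t) x y = 0 := by
  cases t with
  | zero => rw [pow_zero, one_apply_ne (by rintro rfl; exact hy hx)]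
  | succ t => rw [pow_succ, mul_apply]; exact sum_eq_zero fun z _ => by simp [killed, hy]

lemma sum_killed_apply (hP : P ∈ rowStochastic ℝ ι) {x : ι} (hx : x ∈ S) :
    ∑ y, killed P S x y = 1 - ∑ y ∈ Sᶜ, P x y := by
  have hsplit := sum_add_sum_compl S (P x)
  rw [sum_row_of_mem_rowStochastic hP x] at hsplit
  simp only [killed, hx, true_and, sum_ite_mem, univ_inter]
  linarith

lemma one_sub_sum_leak_le_sum_killed_pow (hP : P ∈ rowStochastic ℝ ι) {h : ι → ℝ}
    (hh : ∀ x ∈ S, ∑ y ∈ Sᶜ, P x y ≤ h x) {x₀ : ι} (hx₀ : x₀ ∈ S) (t : ℕ) :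
    1 - ∑ s ∈ range t, (killed P S ^ s *ᵥ h) x₀ ≤ ∑ y, (killed P S ^ t) x₀ y := by
  have hQ := killed_nonneg (fun x y => nonneg_of_mem_rowStochastic hP (i := x) (j := y)) S
  induction t with
  | zero => simp [one_apply]
  | succ t ih =>
    have step : ∀ z, (killed P S ^ t) x₀ z * (1 - h z)
        ≤ (killed P S ^ t) x₀ z * ∑ y, killed P S z y := by
      intro z
      by_cases hz : z ∈ S
      · rw [sum_killed_apply hP hz]
        exact mul_le_mul_of_nonneg_left (by linarith [hh z hz]) (pow_apply_nonneg hQ t x₀ z)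
      · simp [killed_pow_apply_of_notMem hx₀ hz]
    calc 1 - ∑ s ∈ range (t + 1), (killed P S ^ s *ᵥ h) x₀
        ≤ ∑ z, (killed P S ^ t) x₀ z - (killed P S ^ t *ᵥ h) x₀ := by
          rw [sum_range_succ]; linarith
      _ = ∑ z, (killed P S ^ t) x₀ z * (1 - h z) := by
          simp only [mulVec, dotProduct, mul_sub, mul_one, sum_sub_distrib]
      _ ≤ ∑ z, (killed P S ^ t) x₀ z * ∑ y, killed P S z y := sum_le_sum fun z _ => step z
      _ = ∑ y, (killed P S ^ (t + 1)) x₀ y := by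
          simp only [pow_succ, mul_apply, mul_sum]; exact sum_comm

lemma sum_killed_pow_le_sum_pow (hP : ∀ x y, 0 ≤ P x y) {x₀ : ι} (hx₀ : x₀ ∈ S) (t : ℕ) :
    ∑ y, (killed P S ^ t) x₀ y ≤ ∑ y ∈ S, (P ^ t) x₀ y := by
  rw [← sum_add_sum_compl S, sum_eq_zero (s := Sᶜ) fun y hy =>
    killed_pow_apply_of_notMem hx₀ (mem_compl.mp hy) t, add_zero]
  exact sum_le_sum fun y _ => pow_apply_le_pow_apply (killed_nonneg hP S) (killed_le hP S) t x₀ y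

lemma sum_sub_le_half_sum_abs_sub {p q : ι → ℝ} (hpq : ∑ y, p y = ∑ y, q y) (B : Finset ι) :
    ∑ y ∈ B, (p y - q y) ≤ 1 / 2 * ∑ y, |p y - q y| := by
  have hB : ∑ y ∈ B, (p y - q y) ≤ ∑ y ∈ B, |p y - q y| :=
    sum_le_sum fun y _ => le_abs_self _
  have hBc : ∑ y ∈ Bᶜ, -(p y - q y) ≤ ∑ y ∈ Bᶜ, |p y - q y| :=
    sum_le_sum fun y _ => neg_le_abs _
  have hsplit := sum_add_sum_compl B fun y => |p y - q y|
  have hzero : ∑ y ∈ B, (p y - q y) + ∑ y ∈ Bᶜ, (p y - q y) = 0 := by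
    rw [sum_add_sum_compl, sum_sub_distrib, hpq, sub_self]
  rw [sum_neg_distrib] at hBc
  linarith

end Kernels

section Cube

variable {n : ℕ}

def flipAt (j : Fin n) (x : Fin n → Bool) : Fin n → Bool := Function.update x j (!x j)

@[simp]
lemma flipAt_apply_self (j : Fin n) (x : Fin n → Bool) : flipAt j x j = !x j :=
  Function.update_self ..

lemma flipAt_apply_of_ne {i j : Fin n} (h : i ≠ j) (x : Fin n → Bool) : flipAt j x i = x i :=
  Function.update_of_ne h ..

@[simp]
lemma flipAt_flipAt (j : Fin n) (x : Fin n → Bool) : flipAt j (flipAt j x) = x := by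
  simp [flipAt]

lemma flipAt_ne_self (j : Fin n) (x : Fin n → Bool) : flipAt j x ≠ x :=
  fun h => by simpa using congrFun h j

lemma flipAt_left_injective (x : Fin n → Bool) : Function.Injective (flipAt · x) := by
  intro i j h
  by_contra hij
  simpa [flipAt_apply_of_ne hij] using congrFun h i

lemma adjacent_iff_exists_flipAt {x y : Fin n → Bool} : adjacent x y ↔ ∃ j, y = flipAt j x := by
  have key : ∀ j, (univ.filter fun i => x i ≠ y i) = {j} ↔ y = flipAt j x := by
    intro j
    simp only [Finset.ext_iff, mem_filter, mem_univ, true_and, mem_singleton, funext_iff]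
    refine forall_congr' fun i => ?_
    rcases eq_or_ne i j with rfl | hij
    · cases hx : x i <;> cases y i <;> simp [hx]
    · rw [flipAt_apply_of_ne hij]
      cases x i <;> cases y i <;> simp [hij]
  simp only [adjacent, card_eq_one, key]

lemma adjacent_flipAt (j : Fin n) (x : Fin n → Bool) : adjacent x (flipAt j x) :=
  adjacent_iff_exists_flipAt.mpr ⟨j, rfl⟩

def face (s : Finset (Fin n)) : Finset (Fin n → Bool) :=
  univ.filter fun x => ∀ i ∈ s, x i = true

@[simp]
lemma mem_face {s : Finset (Fin n)} {x : Fin n → Bool} : x ∈ face s ↔ ∀ i ∈ s, x i = true := by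
  simp [face]

lemma card_face (s : Finset (Fin n)) : #(face s) = 2 ^ (n - #s) := by
  have : face s = Fintype.piFinset fun i => if i ∈ s then {true} else univ := by
    ext x
    simp only [mem_face, Fintype.mem_piFinset]
    refine forall_congr' fun i => ?_
    split_ifs with hi <;> simp [hi]
  simp only [this, Fintype.card_piFinset, apply_ite card, card_singleton, card_univ,
    Fintype.card_bool, prod_ite, prod_const_one, one_mul, prod_const, filter_not,
    filter_mem_eq_inter, univ_inter, ← compl_eq_univ_sdiff, card_compl, Fintype.card_fin]

lemma face_union (s t : Finset (Fin n)) : face (s ∪ t) = face s ∩ face t := by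
  ext x
  simp [or_imp, forall_and]

lemma face_anti {s t : Finset (Fin n)} (h : s ⊆ t) : face t ⊆ face s :=
  fun _ hx => mem_face.mpr fun i hi => mem_face.mp hx i (h hi)

lemma mem_face_of_le {s : Finset (Fin n)} {x y : Fin n → Bool} (hxy : x ≤ y) (hx : x ∈ face s) :
    y ∈ face s :=
  mem_face.mpr fun i hi => Bool.eq_true_of_true_le (mem_face.mp hx i hi ▸ hxy i)

lemma le_of_mem_face {s : Finset (Fin n)} {x y : Fin n → Bool} (hx : ∀ i, x i = true → i ∈ s)
    (hy : y ∈ face s) : x ≤ y := by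
  intro i
  cases hxi : x i
  · exact Bool.false_le _
  · rw [mem_face.mp hy i (hx i hxi)]

lemma flipAt_mem_face {s : Finset (Fin n)} {x : Fin n → Bool} (hx : x ∈ face s) {j : Fin n}
    (hj : j ∉ s) : flipAt j x ∈ face s :=
  mem_face.mpr fun i hi => by
    rw [flipAt_apply_of_ne (ne_of_mem_of_not_mem hi hj)]; exact mem_face.mp hx i hi

def block (a b : ℕ) : Finset (Fin n) := univ.filter fun i => a ≤ i.1 ∧ i.1 < b

lemma card_block {a b : ℕ} (h : b ≤ n) : #(block a b : Finset (Fin n)) = b - a := by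
  rw [← Nat.card_Ico, ← card_map Fin.valEmbedding]
  congr 1
  ext k
  simp only [block, mem_map, mem_filter, mem_univ, true_and, Fin.valEmbedding_apply, mem_Ico]
  exact ⟨fun ⟨i, hi, hik⟩ => hik ▸ hi, fun hk => ⟨⟨k, by omega⟩, hk, rfl⟩⟩

lemma block_union_block {a b c : ℕ} (hab : a ≤ b) (hbc : b ≤ c) :
    (block a b ∪ block b c : Finset (Fin n)) = block a c := by
  ext i
  simp only [block, mem_union, mem_filter, mem_univ, true_and]
  omega

lemma disjoint_block_block (a b c : ℕ) : Disjoint (block a b : Finset (Fin n)) (block b c) := by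
  simp only [block, disjoint_filter]
  omega

end Cube

section HeatBath

variable {n : ℕ}

/-- The transition operator, acting on observables, of the heat-bath dynamics on `face s`:
pick a coordinate uniformly at random and, unless it lies in `s`, resample it. -/
noncomputable def heatBath (s : Finset (Fin n)) (g : (Fin n → Bool) → ℝ) (x : Fin n → Bool) :
    ℝ :=
  (∑ j, if j ∈ s then g x else
    (g (Function.update x j false) + g (Function.update x j true)) / 2) / n

lemma update_false_add_update_true (g : (Fin n → Bool) → ℝ) (x : Fin n → Bool) (j : Fin n) :
    g (Function.update x j false) + g (Function.update x j true) = g x + g (flipAt j x) := by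
  cases hxj : x j
  · rw [← hxj, Function.update_eq_self, flipAt, hxj, Bool.not_false]
  · rw [← hxj, Function.update_eq_self, flipAt, hxj, Bool.not_true, add_comm]

variable {s : Finset (Fin n)} {g : (Fin n → Bool) → ℝ}

lemma heatBath_nonneg (hg : 0 ≤ g) : 0 ≤ heatBath s g := fun x =>
  div_nonneg (sum_nonneg fun j _ => by
    split_ifs
    exacts [hg x, div_nonneg (add_nonneg (hg _) (hg _)) zero_le_two]) n.cast_nonneg

lemma heatBath_monotone (hg : Monotone g) : Monotone (heatBath s g) := by
  intro x y hxy
  refine div_le_div_of_nonneg_right (sum_le_sum fun j _ => ?_) n.cast_nonneg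
  have hupd : ∀ b, Function.update x j b ≤ Function.update y j b := fun b =>
    update_le_update_iff.mpr ⟨le_rfl, fun k _ => hxy k⟩
  split_ifs
  · exact hg hxy
  · linarith [hg (hupd false), hg (hupd true)]

lemma sum_face_comp_flipAt {j : Fin n} (hj : j ∉ s) :
    ∑ x ∈ face s, g (flipAt j x) = ∑ x ∈ face s, g x :=
  sum_nbij' (flipAt j) (flipAt j) (fun _ hx => flipAt_mem_face hx hj)
    (fun _ hx => flipAt_mem_face hx hj)
    (fun x _ => flipAt_flipAt j x) (fun x _ => flipAt_flipAt j x) fun _ _ => rfl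

lemma sum_face_heatBath (hn : 0 < n) : ∑ x ∈ face s, heatBath s g x = ∑ x ∈ face s, g x := by
  have hj : ∀ j, ∑ x ∈ face s,
      (if j ∈ s then g x else (g (Function.update x j false) + g (Function.update x j true)) / 2)
      = ∑ x ∈ face s, g x := by
    intro j
    split_ifs with hj
    · rfl
    · simp only [update_false_add_update_true, ← sum_div, sum_add_distrib, sum_face_comp_flipAt hj]
      ring
  simp only [heatBath, ← sum_div]
  rw [sum_comm, sum_congr rfl fun j _ => hj j, sum_const, card_univ, Fintype.card_fin,
    nsmul_eq_mul]
  field_simp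

lemma heatBath_apply (hn : 0 < n) (x : Fin n → Bool) :
    heatBath s g x = (1 - #sᶜ / (2 * n)) * g x + (∑ j ∈ sᶜ, g (flipAt j x)) / (2 * n) := by
  rw [heatBath, ← sum_add_sum_compl s, sum_congr rfl fun j hj => if_pos hj,
    sum_congr rfl fun j hj => if_neg (mem_compl.mp hj)]
  simp only [update_false_add_update_true, sum_const, nsmul_eq_mul, ← sum_div, sum_add_distrib]
  have hcard : (#s : ℝ) + #sᶜ = n := by
    exact_mod_cast (card_add_card_compl s).trans (Fintype.card_fin n)
  field_simp
  linear_combination (2 * g x) * hcard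

lemma card_face_mul_iterate_heatBath_le (hn : 0 < n) (hg : Monotone g) {x₀ : Fin n → Bool}
    (hx₀ : ∀ y ∈ face s, x₀ ≤ y) (t : ℕ) :
    #(face s) * (heatBath s)^[t] g x₀ ≤ ∑ x ∈ face s, g x := by
  have hmono : Monotone ((heatBath s)^[t] g) :=
    Set.MapsTo.iterate (f := heatBath s) (s := {g | Monotone g}) (fun _ => heatBath_monotone) t hg
  have hsum : ∀ t, ∑ x ∈ face s, (heatBath s)^[t] g x = ∑ x ∈ face s, g x := by
    intro t
    induction t with
    | zero => rfl
    | succ t ih => rw [Function.iterate_succ_apply', sum_face_heatBath hn, ih]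
  rw [← hsum t, ← nsmul_eq_mul]
  exact card_nsmul_le_sum _ _ _ fun y hy => hmono (hx₀ y hy)

end HeatBath

section Comparison

variable {n : ℕ} {s : Finset (Fin n)}

noncomputable def heatBathMatrix (s : Finset (Fin n)) : Matrix (Fin n → Bool) (Fin n → Bool) ℝ :=
  fun x y => (if y = x then 1 - (#sᶜ : ℝ) / (2 * n) else 0) +
    ∑ j ∈ sᶜ, if y = flipAt j x then 1 / (2 * (n : ℝ)) else 0

lemma heatBathMatrix_nonneg (x y : Fin n → Bool) : 0 ≤ heatBathMatrix s x y := by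
  have : (#sᶜ : ℝ) / (2 * n) ≤ 1 :=
    div_le_one_of_le₀ (by norm_cast; linarith [card_le_univ sᶜ, Fintype.card_fin n]) (by positivity)
  refine add_nonneg ?_ (sum_nonneg fun j _ => ?_) <;> split_ifs
  exacts [sub_nonneg.mpr this, le_rfl, by positivity, le_rfl]

lemma heatBathMatrix_apply_self (x : Fin n → Bool) :
    heatBathMatrix s x x = 1 - #sᶜ / (2 * n) := by
  simp [heatBathMatrix, fun j => (flipAt_ne_self j x).symm]

lemma heatBathMatrix_apply_flipAt {j : Fin n} (hj : j ∉ s) (x : Fin n → Bool) :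
    1 / (2 * n) ≤ heatBathMatrix s x (flipAt j x) := by
  rw [heatBathMatrix, if_neg (flipAt_ne_self j x), zero_add]
  refine (single_le_sum (f := fun i => if flipAt j x = flipAt i x then (1 : ℝ) / (2 * n) else 0)
    (fun i _ => by positivity) (mem_compl.mpr hj)).trans_eq' ?_
  simp

lemma heatBathMatrix_mulVec (hn : 0 < n) (g : (Fin n → Bool) → ℝ) :
    heatBathMatrix s *ᵥ g = heatBath s g := by
  ext x
  simp only [mulVec, dotProduct, heatBathMatrix, add_mul, sum_add_distrib, ite_mul, zero_mul,
    sum_ite_eq', mem_univ, if_true, sum_mul]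
  rw [sum_comm, heatBath_apply hn]
  simp only [sum_ite_eq', mem_univ, if_true, sum_div]
  congr 1
  exact sum_congr rfl fun j _ => by ring

end Comparison

section CensoredChain

variable {n : ℕ} {A : Finset (Fin n → Bool)}

def neighbors (A : Finset (Fin n → Bool)) (x : Fin n → Bool) : Finset (Fin n → Bool) :=
  A.filter fun z => z ≠ x ∧ adjacent x z

lemma censoredPmat_apply_self (x : {x // x ∈ A}) :
    censoredPmat n A x x = 1 - #(neighbors A x) / (2 * n) :=
  if_pos rfl

lemma censoredPmat_apply_of_ne {x y : {x // x ∈ A}} (h : (x : Fin n → Bool) ≠ y) :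
    censoredPmat n A x y = if adjacent (x : Fin n → Bool) y then 1 / (2 * (n : ℝ)) else 0 :=
  if_neg h

lemma card_neighbors_le (A : Finset (Fin n → Bool)) (x : Fin n → Bool) :
    #(neighbors A x) ≤ n := by
  calc #(neighbors A x) ≤ #(univ.image (flipAt · x)) := card_le_card fun z hz => by
        obtain ⟨j, rfl⟩ := adjacent_iff_exists_flipAt.mp (mem_filter.mp hz).2.2
        exact mem_image_of_mem _ (mem_univ j)
    _ ≤ n := card_image_le.trans_eq (card_fin n)

lemma card_compl_le_card_neighbors {s : Finset (Fin n)} (hsA : face s ⊆ A) {x : Fin n → Bool}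
    (hx : x ∈ face s) : #sᶜ ≤ #(neighbors A x) :=
  card_le_card_of_injOn (flipAt · x)
    (fun j hj => mem_filter.mpr
      ⟨hsA (flipAt_mem_face hx (mem_compl.mp hj)), flipAt_ne_self j x, adjacent_flipAt j x⟩)
    (flipAt_left_injective x).injOn

lemma censoredPmat_mem_rowStochastic (hn : 0 < n) (A : Finset (Fin n → Bool)) :
    censoredPmat n A ∈ rowStochastic ℝ {x // x ∈ A} := by
  refine mem_rowStochastic_iff_sum.mpr ⟨fun x y => ?_, fun x => ?_⟩
  · by_cases hxy : (x : Fin n → Bool) = y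
    · rw [← Subtype.ext hxy, censoredPmat_apply_self x, sub_nonneg]
      have : (#(neighbors A x) : ℝ) ≤ n := by exact_mod_cast card_neighbors_le A x
      rw [div_le_one (by positivity)]
      linarith
    · rw [censoredPmat_apply_of_ne hxy]
      split_ifs <;> positivity
  · have hx : (x : Fin n → Bool) ∈ A := x.2
    let f : (Fin n → Bool) → ℝ := fun y =>
      if (x : Fin n → Bool) = y then 1 - #(neighbors A x) / (2 * n)
      else if adjacent (x : Fin n → Bool) y then 1 / (2 * n) else 0
    have hoff : ∑ y ∈ A.erase x, f y = #(neighbors A x) * (1 / (2 * n)) := by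
      rw [sum_congr rfl fun y hy => if_neg (Ne.symm (mem_erase.mp hy).1), ← sum_filter, sum_const,
        nsmul_eq_mul]
      congr 3
      ext z
      simp only [neighbors, mem_filter, mem_erase]
      tauto
    calc ∑ y, censoredPmat n A x y = ∑ y ∈ A, f y := sum_coe_sort A f
      _ = 1 := by
        rw [← add_sum_erase A f hx, hoff]
        simp only [f, if_pos rfl]
        ring

end CensoredChain

section Escape

variable {n : ℕ} {A : Finset (Fin n → Bool)} {s t : Finset (Fin n)}

noncomputable def faceIndicator (s : Finset (Fin n)) (x : Fin n → Bool) : ℝ :=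
  if x ∈ face s then 1 else 0

lemma faceIndicator_nonneg : 0 ≤ faceIndicator s := fun x => by
  unfold faceIndicator; split_ifs <;> norm_num

lemma monotone_faceIndicator : Monotone (faceIndicator s) := by
  intro x y hxy
  unfold faceIndicator
  split_ifs with hx hy
  exacts [le_rfl, absurd (mem_face_of_le hxy hx) hy, zero_le_one, le_rfl]

lemma sum_face_faceIndicator (h : s ⊆ t) : ∑ x ∈ face s, faceIndicator t x = #(face t) := by
  simp only [faceIndicator]
  rw [sum_boole, filter_mem_eq_inter, inter_eq_right.mpr (face_anti h)]

lemma killed_censoredPmat_le_heatBathMatrix (hsA : face s ⊆ A) (x y : {x // x ∈ A}) :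
    killed (censoredPmat n A) ((face s).subtype (· ∈ A)) x y ≤ heatBathMatrix s x y := by
  simp only [killed, mem_subtype]
  split_ifs with h
  · obtain ⟨hx, hy⟩ := h
    by_cases hxy : (x : Fin n → Bool) = y
    · rw [← Subtype.ext hxy, censoredPmat_apply_self, heatBathMatrix_apply_self]
      have : (#sᶜ : ℝ) ≤ #(neighbors A x) := by exact_mod_cast card_compl_le_card_neighbors hsA hx
      gcongr
    · rw [censoredPmat_apply_of_ne hxy]
      split_ifs with hadj
      · obtain ⟨j, hj⟩ := adjacent_iff_exists_flipAt.mp hadj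
        have hjs : j ∉ s := fun hjs => by
          simpa [hj, mem_face.mp hx j hjs] using mem_face.mp hy j hjs
        rw [hj]
        exact heatBathMatrix_apply_flipAt hjs _
      · exact heatBathMatrix_nonneg _ _
  · exact heatBathMatrix_nonneg _ _

lemma killed_mulVec_le_heatBath (hn : 0 < n) (hsA : face s ⊆ A) {g : (Fin n → Bool) → ℝ}
    (hg : 0 ≤ g) : killed (censoredPmat n A) ((face s).subtype (· ∈ A)) *ᵥ (g ∘ Subtype.val)
      ≤ heatBath s g ∘ Subtype.val := by
  intro x
  rw [Function.comp_apply, ← heatBathMatrix_mulVec hn]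
  calc ∑ y, killed (censoredPmat n A) ((face s).subtype (· ∈ A)) x y * g y
      ≤ ∑ y : {x // x ∈ A}, heatBathMatrix s x y * g y :=
        sum_le_sum fun y _ => mul_le_mul_of_nonneg_right
          (killed_censoredPmat_le_heatBathMatrix hsA x y) (hg _)
    _ ≤ ∑ y, heatBathMatrix s x y * g y :=
        sum_coe_le_sum (f := fun y => heatBathMatrix s x y * g y)
          (fun y => mul_nonneg (heatBathMatrix_nonneg _ _) (hg y)) univ

lemma censoredPmat_le_of_mem_face_of_notMem {x y : {x // x ∈ A}} (hx : (x : Fin n → Bool) ∈ face s)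
    (hy : (y : Fin n → Bool) ∉ face s) :
    censoredPmat n A x y
      ≤ (∑ j ∈ s, if (y : Fin n → Bool) = flipAt j x then 1 else 0) / (2 * n) := by
  rw [censoredPmat_apply_of_ne fun h => hy (h ▸ hx)]
  split_ifs with hadj
  · obtain ⟨j, hj⟩ := adjacent_iff_exists_flipAt.mp hadj
    have hjs : j ∈ s := by
      by_contra hjs
      exact hy (hj ▸ flipAt_mem_face hx hjs)
    gcongr
    exact (single_le_sum (fun _ _ => by positivity) hjs).trans_eq' (by simp [hj])
  · positivity

/-- One can only leave `face s` by flipping a coordinate of `s`. -/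
lemma sum_compl_censoredPmat_le {x : {x // x ∈ A}} (hx : (x : Fin n → Bool) ∈ face s) :
    ∑ y ∈ ((face s).subtype (· ∈ A))ᶜ, censoredPmat n A x y ≤ #s / (2 * n) :=
  calc ∑ y ∈ ((face s).subtype (· ∈ A))ᶜ, censoredPmat n A x y
      ≤ ∑ y ∈ ((face s).subtype (· ∈ A))ᶜ,
          (∑ j ∈ s, if (y : Fin n → Bool) = flipAt j x then (1 : ℝ) else 0) / (2 * n) :=
        sum_le_sum fun y hy => censoredPmat_le_of_mem_face_of_notMem hx (by simpa using hy)
    _ ≤ ∑ y, (∑ j ∈ s, if y = flipAt j x then (1 : ℝ) else 0) / (2 * n) :=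
        sum_coe_le_sum (f := fun y => (∑ j ∈ s, if y = flipAt j x then (1 : ℝ) else 0) / (2 * n))
          (fun y => div_nonneg (sum_nonneg fun j _ => by split_ifs <;> norm_num) (by positivity)) _
    _ = #s / (2 * n) := by rw [← sum_div, sum_comm]; simp

lemma censoredPmat_eq_zero_of_notMem_face (hA : A ⊆ face s ∪ face t) (hst : Disjoint s t)
    {x y : {x // x ∈ A}} (hxs : (x : Fin n → Bool) ∈ face s) (hxt : (x : Fin n → Bool) ∉ face t)
    (hy : (y : Fin n → Bool) ∉ face s) : censoredPmat n A x y = 0 := by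
  rw [censoredPmat_apply_of_ne (fun h => hy (h ▸ hxs)), if_neg]
  intro hadj
  obtain ⟨j, hj⟩ := adjacent_iff_exists_flipAt.mp hadj
  have hyt : (y : Fin n → Bool) ∈ face t := (mem_union.mp (hA y.2)).resolve_left hy
  have hjs : j ∈ s := by
    by_contra hjs
    exact hy (hj ▸ flipAt_mem_face hxs hjs)
  exact hxt (by simpa [hj] using flipAt_mem_face hyt (disjoint_left.mp hst hjs))

/-- Within `face s`, the chain can only escape from `face s ∩ face t`. -/
lemma sum_compl_censoredPmat_le_faceIndicator (hA : A ⊆ face s ∪ face t) (hst : Disjoint s t)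
    {x : {x // x ∈ A}} (hx : (x : Fin n → Bool) ∈ face s) :
    ∑ y ∈ ((face s).subtype (· ∈ A))ᶜ, censoredPmat n A x y
      ≤ #s / (2 * n) * faceIndicator (s ∪ t) x := by
  by_cases hxt : (x : Fin n → Bool) ∈ face t
  · simpa [faceIndicator, face_union, hx, hxt] using sum_compl_censoredPmat_le hx
  · rw [faceIndicator, face_union, if_neg fun h => hxt (mem_inter.mp h).2, mul_zero]
    exact (sum_eq_zero fun y hy =>
      censoredPmat_eq_zero_of_notMem_face hA hst hx hxt (by simpa using hy)).le

theorem one_sub_le_sum_censoredPmat_pow_face (hn : 0 < n) (hA : A ⊆ face s ∪ face t)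
    (hsA : face s ⊆ A) (hst : Disjoint s t) {x₀ : {x // x ∈ A}}
    (hx₀ : (x₀ : Fin n → Bool) = fun i => decide (i ∈ s)) (k : ℕ) :
    1 - k * (#s / (2 * n)) * (#(face (s ∪ t)) / #(face s))
      ≤ ∑ y ∈ (face s).subtype (· ∈ A), (censoredPmat n A ^ k) x₀ y := by
  set P := censoredPmat n A
  set S := (face s).subtype (· ∈ A)
  have hP := censoredPmat_mem_rowStochastic hn A
  have hP₀ : ∀ x y, 0 ≤ P x y := fun x y => nonneg_of_mem_rowStochastic hP (i := x) (j := y)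
  have hx₀s : (x₀ : Fin n → Bool) ∈ face s := by simp [hx₀]
  have hx₀S : x₀ ∈ S := mem_subtype.mpr hx₀s
  have hleak : ∀ x ∈ S, ∑ y ∈ Sᶜ, P x y
      ≤ ((#s / (2 * n) : ℝ) • (faceIndicator (s ∪ t) ∘ Subtype.val)) x := fun x hx =>
    sum_compl_censoredPmat_le_faceIndicator hA hst (mem_subtype.mp hx)
  have hvisit : ∀ j, (killed P S ^ j *ᵥ (faceIndicator (s ∪ t) ∘ Subtype.val)) x₀
      ≤ #(face (s ∪ t)) / #(face s) := by
    intro j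
    refine (pow_mulVec_comp_le_iterate (killed_nonneg hP₀ S) _ (fun _ => heatBath_nonneg)
      (fun _ hg => killed_mulVec_le_heatBath hn hsA hg) j faceIndicator_nonneg x₀).trans ?_
    rw [le_div_iff₀ (by exact_mod_cast card_pos.mpr ⟨_, hx₀s⟩ : (0 : ℝ) < #(face s)), mul_comm,
      ← sum_face_faceIndicator subset_union_left]
    exact card_face_mul_iterate_heatBath_le hn monotone_faceIndicator
      (fun y => le_of_mem_face (by simp [hx₀])) j
  calc 1 - k * (#s / (2 * n)) * (#(face (s ∪ t)) / #(face s))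
      ≤ 1 - ∑ j ∈ range k,
          (killed P S ^ j *ᵥ ((#s / (2 * n) : ℝ) • (faceIndicator (s ∪ t) ∘ Subtype.val))) x₀ := by
        have := sum_le_card_nsmul (range k) _ _ fun j _ =>
          mul_le_mul_of_nonneg_left (hvisit j) (by positivity : (0 : ℝ) ≤ #s / (2 * n))
        simp only [mulVec_smul, Pi.smul_apply, smul_eq_mul, card_range, nsmul_eq_mul] at this ⊢
        linarith
    _ ≤ ∑ y, (killed P S ^ k) x₀ y := one_sub_sum_leak_le_sum_killed_pow hP hleak hx₀S k
    _ ≤ ∑ y ∈ S, (P ^ k) x₀ y := sum_killed_pow_le_sum_pow hP₀ hx₀S k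

end Escape

section TwoBlocks

variable {n m : ℕ}

lemma twoBlocks_eq : twoBlocks n m = face (block 0 m) ∪ face (block m (2 * m)) := by
  ext x
  simp [twoBlocks, block]

lemma card_twoBlocks_add (h : 2 * m ≤ n) :
    #(twoBlocks n m) + 2 ^ (n - 2 * m) = 2 * 2 ^ (n - m) := by
  have := card_union_add_card_inter (face (block 0 m : Finset (Fin n))) (face (block m (2 * m)))
  rw [← face_union, block_union_block (Nat.zero_le m) (by omega), card_face, card_face, card_face,
    card_block h, card_block (by omega), card_block (by omega), Nat.sub_zero, Nat.sub_zero,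
    ← twoBlocks_eq] at this
  rw [this, show n - (2 * m - m) = n - m by omega, two_mul]

lemma card_face_block_div_card_twoBlocks_le (hm : 5 ≤ m) (h : 2 * m ≤ n) :
    (#(face (block 0 m : Finset (Fin n))) : ℝ) / #(twoBlocks n m) ≤ 33 / 64 := by
  have hA := card_twoBlocks_add h
  have hsplit : 2 ^ (n - m) = 2 ^ m * 2 ^ (n - 2 * m) := by rw [← pow_add]; congr 1; omega
  have h32 : 32 * 2 ^ (n - 2 * m) ≤ 2 ^ m * 2 ^ (n - 2 * m) :=
    Nat.mul_le_mul_right _ (Nat.pow_le_pow_right two_pos hm)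
  have hpos : 0 < 2 ^ (n - 2 * m) := by positivity
  rw [card_face, card_block (by omega), Nat.sub_zero, div_le_div_iff₀ (by norm_cast; omega)
    (by norm_num)]
  exact_mod_cast (by omega : 2 ^ (n - m) * 64 ≤ 33 * #(twoBlocks n m))

lemma escape_rate_le {t : ℕ} (hm : 4 ≤ m) (h : 2 * m ≤ n) (ht : t < 2 ^ (m - 4)) :
    (t : ℝ) * (m / (2 * n)) * (2 ^ (n - 2 * m) / 2 ^ (n - m)) ≤ 1 / 64 := by
  have hm_le : (m : ℝ) / (2 * n) ≤ 1 / 4 := by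
    have : (2 * m : ℝ) ≤ n := by exact_mod_cast h
    have : (0 : ℝ) < n := by exact_mod_cast (by omega : 0 < n)
    rw [div_le_iff₀ (by positivity)]
    linarith
  have hratio : (2 : ℝ) ^ (n - 2 * m) / 2 ^ (n - m) = 1 / 2 ^ m := by
    rw [show n - m = m + (n - 2 * m) by omega, pow_add]
    field_simp
  have ht_le : (t : ℝ) / 2 ^ m ≤ 1 / 16 := by
    have : (t : ℝ) ≤ 2 ^ (m - 4) := by exact_mod_cast ht.le
    rw [div_le_iff₀ (by positivity), show m = m - 4 + 4 by omega, pow_add]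
    linarith
  calc (t : ℝ) * (m / (2 * n)) * (2 ^ (n - 2 * m) / 2 ^ (n - m))
      = m / (2 * n) * (t / 2 ^ m) := by rw [hratio]; ring
    _ ≤ 1 / 4 * (1 / 16) := mul_le_mul hm_le ht_le (by positivity) (by norm_num)
    _ = 1 / 64 := by norm_num

end TwoBlocks

end CensoredGlauber

open CensoredGlauber

/-- Lower bound on the mixing time of the censored Glauber chain on
`A = {x : x_1 = ⋯ = x_m = 1} ∪ {x : x_{m+1} = ⋯ = x_{2m} = 1}` with
`n ≥ 2m`, `m ≥ 5`: started from the point `x_0` with `x_i = 1` exactly for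
`i ≤ m`, after any `t < 2^{m-4}` steps the total variation distance to the
uniform distribution on `A` still exceeds `1/4`. -/
theorem censored_chain_mixing_lower {n m : ℕ} (hm : 5 ≤ m) (hnm : 2 * m ≤ n)
    (t : ℕ) (ht : t < 2 ^ (m - 4))
    (x0 : {x // x ∈ twoBlocks n m})
    (hx0 : (x0 : Fin n → Bool) = fun i => decide (i.1 < m)) :
    (1 / 2) * ∑ y : {x // x ∈ twoBlocks n m},
        |(censoredPmat n (twoBlocks n m) ^ t) x0 y - 1 / ((twoBlocks n m).card : ℝ)|
      > 1 / 4 := by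
  have hn : 0 < n := by omega
  set S := (face (block 0 m : Finset (Fin n))).subtype (· ∈ twoBlocks n m)
  have hstay := one_sub_le_sum_censoredPmat_pow_face hn twoBlocks_eq.subset
    (twoBlocks_eq ▸ subset_union_left) (disjoint_block_block 0 m (2 * m))
    (by rw [hx0]; ext i; simp [block]) t
  rw [block_union_block (Nat.zero_le m) (by omega), card_face, card_face, card_block (by omega),
    card_block (by omega), Nat.sub_zero, Nat.sub_zero] at hstay
  push_cast at hstay
  have hrate := escape_rate_le (by omega) hnm ht
  have hπ : ∑ y ∈ S, 1 / (#(twoBlocks n m) : ℝ) ≤ 33 / 64 := by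
    rw [sum_const, card_subtype, filter_true_of_mem fun x hx => twoBlocks_eq ▸ mem_union_left _ hx,
      nsmul_eq_mul, mul_one_div]
    exact card_face_block_div_card_twoBlocks_le hm hnm
  have htv := sum_sub_le_half_sum_abs_sub (p := (censoredPmat n (twoBlocks n m) ^ t) x0)
    (q := fun _ => 1 / (#(twoBlocks n m) : ℝ)) ?_ S
  · rw [sum_sub_distrib] at htv
    linarith
  · rw [sum_row_of_mem_rowStochastic (pow_mem (censoredPmat_mem_rowStochastic hn _) t), sum_const,
      card_univ, Fintype.card_coe, nsmul_eq_mul, mul_one_div, div_self]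
    exact_mod_cast (card_pos.mpr ⟨_, x0.2⟩).ne'
end
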